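/- arXiv:1810.00738 — 5 statements merged into one kernel-verified Lean document; each statement's English description precedes it below -/
import Mathlib

section
/- For a single Gaussian, the total variation distance between N_ℝ(0,(1-ε)²σ²) and N_ℝ(0,σ²) is at most ε/(1-ε) ≤ 2ε for ε ∈ (0, 1/2]. -/
/-!
For `0 < c ≤ 1` the density of `N(m, c²v)` is pointwise at most `c⁻¹` times that of `N(m, v)`:
the normalising constant grows by `c⁻¹` and the exponential factor only decreases. Hence
`N(m, c²v) ≤ c⁻¹ • N(m, v)` as measures, and for probability measures `μ ≤ K • ν` gives
`μ s - ν s ≤ (K - 1) ν s ≤ K - 1`, the other direction following by passing to `sᶜ`.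
With `K = c⁻¹` and `c = 1 - ε` the bound is `ε / (1 - ε)`.
-/

open MeasureTheory ProbabilityTheory Real
open scoped NNReal

section DominatedMeasures

variable {α : Type*} [MeasurableSpace α] {μ ν : Measure α} [IsProbabilityMeasure μ]
  [IsProbabilityMeasure ν] {K : ℝ≥0}

lemma measureReal_sub_le_of_le_smul (h : μ ≤ K • ν) (s : Set α) :
    μ.real s - ν.real s ≤ K - 1 := by
  have hle : μ.real s ≤ K * ν.real s := by
    simpa [Measure.real, ENNReal.toReal_mul] using
      ENNReal.toReal_mono (by simp [ENNReal.mul_eq_top]) (h s)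
  have hK : (1 : ℝ) ≤ K := by
    simpa [Measure.real] using ENNReal.toReal_mono (by simp) (h Set.univ)
  nlinarith [measureReal_le_one (μ := ν) (s := s)]

lemma abs_measureReal_sub_le_of_le_smul (h : μ ≤ K • ν) {s : Set α} (hs : MeasurableSet s) :
    |μ.real s - ν.real s| ≤ K - 1 := by
  rw [abs_sub_le_iff]
  refine ⟨measureReal_sub_le_of_le_smul h s, ?_⟩
  have hcompl := measureReal_sub_le_of_le_smul h sᶜ
  rw [probReal_compl_eq_one_sub hs, probReal_compl_eq_one_sub hs] at hcompl
  linarith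

end DominatedMeasures

lemma gaussianPDFReal_mul_sq_var_le (m : ℝ) (v : ℝ≥0) {c : ℝ≥0} (hc0 : 0 < c) (hc1 : c ≤ 1)
    (x : ℝ) : gaussianPDFReal m (c ^ 2 * v) x ≤ c⁻¹ * gaussianPDFReal m v x := by
  rcases eq_or_ne v 0 with rfl | hv
  · simp
  have hsqrt : √(2 * π * ↑(c ^ 2 * v)) = c * √(2 * π * v) := by
    rw [NNReal.coe_mul, NNReal.coe_pow, show 2 * π * (c ^ 2 * v : ℝ) = c ^ 2 * (2 * π * v) by ring,
      Real.sqrt_mul (by positivity), Real.sqrt_sq c.coe_nonneg]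
  have hvar : (2 * ↑(c ^ 2 * v) : ℝ) ≤ 2 * v := by
    have : (c : ℝ) ^ 2 ≤ 1 := pow_le_one₀ c.coe_nonneg hc1
    push_cast
    nlinarith [v.coe_nonneg]
  rw [gaussianPDFReal, gaussianPDFReal, hsqrt, mul_inv, mul_assoc]
  gcongr _ * (_ * rexp ?_)
  rw [neg_div, neg_div, neg_le_neg_iff]
  exact div_le_div_of_nonneg_left (sq_nonneg _) (by positivity) hvar

lemma gaussianReal_mul_sq_var_le_smul (m : ℝ) (v : ℝ≥0) {c : ℝ≥0} (hc0 : 0 < c) (hc1 : c ≤ 1) :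
    gaussianReal m (c ^ 2 * v) ≤ c⁻¹ • gaussianReal m v := by
  rcases eq_or_ne v 0 with rfl | hv
  · intro s
    rw [mul_zero, Measure.smul_apply, ENNReal.smul_def, smul_eq_mul]
    exact le_mul_of_one_le_left' (by exact_mod_cast (one_le_inv₀ hc0).mpr hc1)
  have hv' : c ^ 2 * v ≠ 0 := mul_ne_zero (pow_ne_zero _ hc0.ne') hv
  rw [gaussianReal_of_var_ne_zero m hv', gaussianReal_of_var_ne_zero m hv,
    ← Measure.coe_nnreal_smul, ← withDensity_smul _ (measurable_gaussianPDF m v)]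
  refine withDensity_mono (ae_of_all _ fun x => ?_)
  simp only [gaussianPDF, Pi.smul_apply, smul_eq_mul]
  rw [← ENNReal.ofReal_coe_nnreal, ← ENNReal.ofReal_mul (by positivity)]
  exact ENNReal.ofReal_le_ofReal (gaussianPDFReal_mul_sq_var_le m v hc0 hc1 x)

theorem tv_gaussian_shrunk_variance_le_general (σ : ℝ≥0) (ε : ℝ)
    (hε : ε ∈ Set.Ioc (0 : ℝ) (1/2))
    (A : Set ℝ) (hA : MeasurableSet A) :
    |((gaussianReal 0 (((1 - ε).toNNReal) ^ 2 * σ ^ 2)) A).toReal -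
        ((gaussianReal 0 (σ ^ 2)) A).toReal| ≤ ε / (1 - ε) ∧
      ε / (1 - ε) ≤ 2 * ε := by
  obtain ⟨hε0, hε2⟩ := hε
  have hc : ((1 - ε).toNNReal : ℝ) = 1 - ε := Real.coe_toNNReal _ (by linarith)
  have hc0 : 0 < (1 - ε).toNNReal := Real.toNNReal_pos.mpr (by linarith)
  have hc1 : (1 - ε).toNNReal ≤ 1 := Real.toNNReal_le_one.mpr (by linarith)
  have hK : (((1 - ε).toNNReal⁻¹ : ℝ≥0) : ℝ) - 1 = ε / (1 - ε) := by
    have : 1 - ε ≠ 0 := by linarith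
    rw [NNReal.coe_inv, hc]
    field_simp
    ring
  refine ⟨?_, ?_⟩
  · rw [← hK]
    exact abs_measureReal_sub_le_of_le_smul (gaussianReal_mul_sq_var_le_smul 0 (σ ^ 2) hc0 hc1) hA
  · rw [div_le_iff₀ (by linarith)]
    nlinarith

/-- The total variation distance between `N(0, (1-ε)²σ²)` and `N(0, σ²)` is at most
`ε/(1-ε)`, which is itself at most `2ε`, for `ε ∈ (0, 1/2]`. -/
theorem tv_gaussian_shrunk_variance_le (σ : ℝ≥0) (hσ : 0 < σ) (ε : ℝ)
    (hε : ε ∈ Set.Ioc (0 : ℝ) (1/2))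
    (A : Set ℝ) (hA : MeasurableSet A) :
    |((gaussianReal 0 (((1 - ε).toNNReal) ^ 2 * σ ^ 2)) A).toReal -
        ((gaussianReal 0 (σ ^ 2)) A).toReal| ≤ ε / (1 - ε) ∧
      ε / (1 - ε) ≤ 2 * ε :=
  tv_gaussian_shrunk_variance_le_general σ ε hε A hA
end

section
/- The total variation distance between two product probability measures is at most the sum of the total variation distances between the corresponding factors: ‖⊗_{i=1}^M P_i − ⊗_{i=1}^M Q_i‖ ≤ ∑_{i=1}^M ‖P_i − Q_i‖. -/
/-!
Peel off the first coordinate: `⊗P = P₀ ⊗ P'` and, by Fubini, `(P₀ ⊗ P') B = ∫ P'(B_x) dP₀(x)`.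
Replacing `P₀` by `Q₀` changes this by at most `ε₀`, because the integrand takes values in
`[0, 1]` (split the integral along a Hahn decomposition of `P₀ - Q₀`); replacing `P'` by `Q'`
changes each section `P'(B_x)` by at most `∑_{i > 0} εᵢ`, by induction. Both comparisons are made
one-sidedly in `ℝ≥0∞`, as `μ s ≤ ν s + δ`, which avoids truncated subtraction.
-/

open MeasureTheory ENNReal

lemma ENNReal.abs_toReal_sub_le_iff {a b : ℝ≥0∞} (ha : a ≠ ∞) (hb : b ≠ ∞) {r : ℝ}
    (hr : 0 ≤ r) :
    |a.toReal - b.toReal| ≤ r ↔ a ≤ b + ENNReal.ofReal r ∧ b ≤ a + ENNReal.ofReal r := by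
  have toReal_sub_le_iff : ∀ {x y : ℝ≥0∞}, x ≠ ∞ → y ≠ ∞ →
      (x.toReal - y.toReal ≤ r ↔ x ≤ y + ENNReal.ofReal r) := by
    intro x y hx hy
    rw [sub_le_iff_le_add', ← ENNReal.ofReal_le_ofReal_iff (by positivity),
      ENNReal.ofReal_add toReal_nonneg hr, ofReal_toReal hx, ofReal_toReal hy]
  rw [abs_sub_le_iff, toReal_sub_le_iff ha hb, toReal_sub_le_iff hb ha]

namespace MeasureTheory

variable {α β : Type*} [MeasurableSpace α] [MeasurableSpace β]

lemma lintegral_le_lintegral_add_of_le {μ ν : Measure α} [IsFiniteMeasure ν] (hνμ : ν ≤ μ)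
    {f : α → ℝ≥0∞} (hf : ∀ x, f x ≤ 1) :
    ∫⁻ x, f x ∂μ ≤ ∫⁻ x, f x ∂ν + (μ Set.univ - ν Set.univ) := by
  calc ∫⁻ x, f x ∂μ = ∫⁻ x, f x ∂(μ - ν) + ∫⁻ x, f x ∂ν := by
        rw [← lintegral_add_measure, Measure.sub_add_cancel_of_le hνμ]
    _ ≤ (μ - ν) Set.univ + ∫⁻ x, f x ∂ν := by
        gcongr
        simpa using lintegral_mono hf (μ := μ - ν)
    _ = ∫⁻ x, f x ∂ν + (μ Set.univ - ν Set.univ) := by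
        rw [Measure.sub_apply MeasurableSet.univ hνμ, add_comm]

lemma lintegral_le_lintegral_add_of_forall_measure_le_add {μ ν : Measure α}
    [IsFiniteMeasure μ] [IsFiniteMeasure ν] {δ : ℝ≥0∞}
    (h : ∀ s, MeasurableSet s → μ s ≤ ν s + δ) {f : α → ℝ≥0∞} (hf : ∀ x, f x ≤ 1) :
    ∫⁻ x, f x ∂μ ≤ ∫⁻ x, f x ∂ν + δ := by
  obtain ⟨u, hu⟩ := exists_isHahnDecomposition ν μ
  calc ∫⁻ x, f x ∂μ = ∫⁻ x in u, f x ∂μ + ∫⁻ x in uᶜ, f x ∂μ :=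
        (lintegral_add_compl f hu.measurableSet).symm
    _ ≤ (∫⁻ x in u, f x ∂ν + (μ u - ν u)) + ∫⁻ x in uᶜ, f x ∂ν := by
        refine add_le_add ?_ (lintegral_mono' hu.ge_on_compl le_rfl)
        simpa using lintegral_le_lintegral_add_of_le hu.le_on hf
    _ = ∫⁻ x, f x ∂ν + (μ u - ν u) := by
        rw [add_right_comm, lintegral_add_compl f hu.measurableSet]
    _ ≤ ∫⁻ x, f x ∂ν + δ := by
        gcongr
        exact tsub_le_iff_left.2 (h u hu.measurableSet)

lemma Measure.prod_apply_le_prod_apply_add {μ μ' : Measure α} {ν ν' : Measure β}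
    [IsFiniteMeasure μ] [IsProbabilityMeasure μ'] [IsProbabilityMeasure ν] [SFinite ν']
    {δ δ' : ℝ≥0∞} (hμ : ∀ s, MeasurableSet s → μ s ≤ μ' s + δ)
    (hν : ∀ t, MeasurableSet t → ν t ≤ ν' t + δ') {s : Set (α × β)} (hs : MeasurableSet s) :
    μ.prod ν s ≤ μ'.prod ν' s + (δ + δ') := by
  calc μ.prod ν s = ∫⁻ x, ν (Prod.mk x ⁻¹' s) ∂μ := Measure.prod_apply hs
    _ ≤ ∫⁻ x, ν (Prod.mk x ⁻¹' s) ∂μ' + δ :=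
        lintegral_le_lintegral_add_of_forall_measure_le_add hμ fun _ => prob_le_one
    _ ≤ ∫⁻ x, (ν' (Prod.mk x ⁻¹' s) + δ') ∂μ' + δ := by
        gcongr with x
        exact hν _ (measurable_prodMk_left hs)
    _ = μ'.prod ν' s + (δ + δ') := by
        rw [lintegral_add_right _ measurable_const, lintegral_const, measure_univ, mul_one,
          ← Measure.prod_apply hs, add_assoc, add_comm δ']

lemma Measure.pi_apply_le_pi_apply_add_sum {n : ℕ} {X : Fin n → Type*}
    [∀ i, MeasurableSpace (X i)] {P Q : ∀ i, Measure (X i)} [∀ i, IsProbabilityMeasure (P i)]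
    [∀ i, IsProbabilityMeasure (Q i)] {δ : Fin n → ℝ≥0∞}
    (h : ∀ i s, MeasurableSet s → P i s ≤ Q i s + δ i) {A : Set (∀ i, X i)}
    (hA : MeasurableSet A) :
    Measure.pi P A ≤ Measure.pi Q A + ∑ i, δ i := by
  induction n with
  | zero => simp [Measure.pi_of_empty P, Measure.pi_of_empty Q]
  | succ n ih =>
    have hpi : ∀ (R : ∀ i, Measure (X i)) [∀ i, IsProbabilityMeasure (R i)], Measure.pi R A =
        ((R 0).prod (Measure.pi fun j => R (Fin.succAbove 0 j)))
          ((MeasurableEquiv.piFinSuccAbove X 0).symm ⁻¹' A) := fun R _ =>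
      ((measurePreserving_piFinSuccAbove R 0).symm.measure_preimage hA.nullMeasurableSet).symm
    rw [hpi P, hpi Q, Fin.sum_univ_succAbove δ 0]
    exact Measure.prod_apply_le_prod_apply_add (h 0) (fun t ht => ih (fun j => h _) ht)
      ((MeasurableEquiv.piFinSuccAbove X 0).symm.measurable hA)

end MeasureTheory

/-- The total variation distance between two product probability measures is at most the sum
of the total variation distances between the corresponding factors: if each factor pair
`(P i, Q i)` has total variation distance at most `ε i` (i.e. `|P i s - Q i s| ≤ ε i` for all
measurable `s`), then `|⊗P A - ⊗Q A| ≤ ∑ i, ε i` for every measurable `A`. -/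
theorem tv_pi_le_sum_tv {M : ℕ} {X : Fin M → Type*} [∀ i, MeasurableSpace (X i)]
    (P Q : ∀ i, Measure (X i)) [∀ i, IsProbabilityMeasure (P i)]
    [∀ i, IsProbabilityMeasure (Q i)] (ε : Fin M → ℝ)
    (h : ∀ i, ∀ s : Set (X i), MeasurableSet s → |((P i) s).toReal - ((Q i) s).toReal| ≤ ε i)
    (A : Set (∀ i, X i)) (hA : MeasurableSet A) :
    |((Measure.pi P) A).toReal - ((Measure.pi Q) A).toReal| ≤ ∑ i, ε i := by
  have hε : ∀ i, 0 ≤ ε i := fun i => by simpa using h i ∅ .empty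
  have hfactor : ∀ i s, MeasurableSet s →
      P i s ≤ Q i s + ENNReal.ofReal (ε i) ∧ Q i s ≤ P i s + ENNReal.ofReal (ε i) :=
    fun i s hs => (abs_toReal_sub_le_iff (measure_ne_top _ _) (measure_ne_top _ _) (hε i)).1
      (h i s hs)
  rw [abs_toReal_sub_le_iff (measure_ne_top _ _) (measure_ne_top _ _)
    (Finset.sum_nonneg fun i _ => hε i), ofReal_sum_of_nonneg fun i _ => hε i]
  exact ⟨Measure.pi_apply_le_pi_apply_add_sum (fun i s hs => (hfactor i s hs).1) hA,
    Measure.pi_apply_le_pi_apply_add_sum (fun i s hs => (hfactor i s hs).2) hA⟩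
end

section
/- Paturi's extrapolation lemma: if p is a real polynomial of degree at most r and |p(x)| ≤ Δ for all x with |x| ≤ ε (where 0 < ε ≤ 1), then |p(1)| ≤ Δ · e^{2r(1+1/ε)}. -/
/-!
Interpolate `p` at the `r + 1` equally spaced nodes `jε/r`, `0 ≤ j ≤ r`, of `[0, ε]`. Each node
lies within distance `1` of the point `1`, so the `i`-th Lagrange basis polynomial is at most
`(r/ε)^r / (i! (r-i)!)` at `1`; summing over `i` gives
`|p(1)| ≤ Δ (2r/ε)^r / r!`, and `x^r / r! ≤ e^x`.
-/

open Finset Polynomial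
open scoped Nat

theorem prod_erase_range_abs_sub {r i : ℕ} (hi : i ≤ r) :
    ∏ j ∈ (range (r + 1)).erase i, |(i : ℝ) - j| = i ! * (r - i)! := by
  have hsplit : (range (r + 1)).erase i = range i ∪ Ico (i + 1) (r + 1) := by
    ext j
    simp only [mem_erase, mem_range, mem_union, mem_Ico]
    omega
  have hdisj : Disjoint (range i) (Ico (i + 1) (r + 1)) := by
    simp only [disjoint_left, mem_range, mem_Ico]
    omega
  have hbelow : ∏ j ∈ range i, |(i : ℝ) - j| = i ! := by
    rw [← Nat.descFactorial_self, Nat.descFactorial_eq_prod_range, Nat.cast_prod]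
    refine prod_congr rfl fun j hj => ?_
    have hji : j ≤ i := (mem_range.mp hj).le
    rw [Nat.cast_sub hji, abs_of_nonneg (sub_nonneg.mpr (Nat.cast_le.mpr hji))]
  have habove : ∏ j ∈ Ico (i + 1) (r + 1), |(i : ℝ) - j| = (r - i)! := by
    rw [prod_Ico_eq_prod_range, show r + 1 - (i + 1) = r - i by omega,
      ← prod_range_add_one_eq_factorial, Nat.cast_prod]
    refine prod_congr rfl fun k _ => ?_
    rw [abs_sub_comm, abs_of_nonneg (by push_cast; linarith)]
    push_cast
    ring
  rw [hsplit, prod_union hdisj, hbelow, habove]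

theorem sum_range_inv_factorial_mul_factorial (r : ℕ) :
    ∑ i ∈ range (r + 1), ((i ! * (r - i)! : ℝ))⁻¹ = 2 ^ r / r ! := by
  have hterm : ∀ i ∈ range (r + 1), ((i ! * (r - i)! : ℝ))⁻¹ = r.choose i / r ! := by
    intro i hi
    rw [Nat.cast_choose ℝ (mem_range_succ_iff.mp hi)]
    field_simp
  rw [sum_congr rfl hterm, ← sum_div, ← Nat.cast_sum, Nat.sum_range_choose]
  push_cast
  rfl

namespace Lagrange

variable {ι : Type*} [DecidableEq ι] {s : Finset ι}

theorem eval_eq_sum_eval_mul_eval_basis {F : Type*} [Field F] {v : ι → F} (hvs : Set.InjOn v s)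
    {p : F[X]} (hp : p.degree < #s) (x : F) :
    p.eval x = ∑ i ∈ s, p.eval (v i) * (Lagrange.basis s v i).eval x := by
  conv_lhs => rw [eq_interpolate hvs hp]
  simp [interpolate_apply, eval_finsetSum]

theorem abs_eval_basis_le {v : ι → ℝ} {x M : ℝ} (hM : ∀ j ∈ s, |x - v j| ≤ M) (i : ι) :
    |(Lagrange.basis s v i).eval x| ≤ ∏ j ∈ s.erase i, M / |v i - v j| := by
  rw [Lagrange.basis, eval_prod, abs_prod]
  refine prod_le_prod (fun _ _ => abs_nonneg _) fun j hj => ?_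
  rw [basisDivisor, eval_mul, eval_C, eval_sub, eval_X, eval_C, abs_mul, abs_inv, inv_mul_eq_div]
  exact div_le_div_of_nonneg_right (hM j (mem_of_mem_erase hj)) (abs_nonneg _)

theorem abs_eval_basis_equispaced_le {r i : ℕ} (hi : i ≤ r) {h x M : ℝ} (hh : 0 < h)
    (hM : ∀ j ≤ r, |x - h * j| ≤ M) :
    |(Lagrange.basis (range (r + 1)) (fun j => h * j) i).eval x|
      ≤ (M / h) ^ r / (i ! * (r - i)!) := by
  refine (abs_eval_basis_le (fun j hj => hM j (mem_range_succ_iff.mp hj)) i).trans_eq ?_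
  have hnode : ∀ j : ℕ, M / |h * i - h * j| = M / h * |(i : ℝ) - j|⁻¹ := fun j => by
    rw [← mul_sub, abs_mul, abs_of_pos hh, div_mul_eq_div_div, div_eq_mul_inv]
  rw [prod_congr rfl fun j _ => hnode j, prod_mul_distrib, prod_const, prod_inv_distrib,
    prod_erase_range_abs_sub hi, card_erase_of_mem (mem_range_succ_iff.mpr hi), card_range,
    Nat.succ_sub_one, ← div_eq_mul_inv]

end Lagrange

theorem abs_eval_le_of_abs_eval_equispaced_le {p : ℝ[X]} {r : ℕ} (hdeg : p.natDegree ≤ r)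
    {h x M Δ : ℝ} (hh : 0 < h) (hM : ∀ j ≤ r, |x - h * j| ≤ M)
    (hp : ∀ j ≤ r, |p.eval (h * j)| ≤ Δ) :
    |p.eval x| ≤ Δ * (2 * M / h) ^ r / r ! := by
  have hΔ : 0 ≤ Δ := (abs_nonneg _).trans (hp 0 r.zero_le)
  have hinj : Set.InjOn (fun j : ℕ => h * j) (range (r + 1)) := fun a _ b _ hab => by
    simpa [hh.ne'] using hab
  have hdeg' : p.degree < #(range (r + 1)) := by
    rw [card_range]
    exact (degree_le_natDegree).trans_lt (by exact_mod_cast Nat.lt_succ_of_le hdeg)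
  rw [Lagrange.eval_eq_sum_eval_mul_eval_basis hinj hdeg' x]
  calc |∑ i ∈ range (r + 1), p.eval (h * i) * (Lagrange.basis _ _ i).eval x|
      ≤ ∑ i ∈ range (r + 1), Δ * ((M / h) ^ r / (i ! * (r - i)!)) := by
        refine (abs_sum_le_sum_abs _ _).trans (sum_le_sum fun i hi => ?_)
        have hir := mem_range_succ_iff.mp hi
        rw [abs_mul]
        exact mul_le_mul (hp i hir) (Lagrange.abs_eval_basis_equispaced_le hir hh hM)
          (abs_nonneg _) hΔ
    _ = Δ * (2 * M / h) ^ r / r ! := by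
        simp_rw [div_eq_mul_inv _ ((_ ! : ℝ) * _), ← mul_assoc, ← mul_sum,
          sum_range_inv_factorial_mul_factorial]
        ring

theorem paturi_extrapolation_general (p : Polynomial ℝ) (r : ℕ) (hdeg : p.natDegree ≤ r)
    (Δ ε : ℝ) (hε : ε ∈ Set.Ioc (0 : ℝ) 1)
    (hbound : ∀ x : ℝ, |x| ≤ ε → |p.eval x| ≤ Δ) :
    |p.eval 1| ≤ Δ * Real.exp (2 * r * (1 + 1 / ε)) := by
  obtain ⟨hε0, hε1⟩ := hε
  have h0 : |p.eval 0| ≤ Δ := hbound 0 (by simpa using hε0.le)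
  have hΔ : 0 ≤ Δ := (abs_nonneg _).trans h0
  rcases r.eq_zero_or_pos with rfl | hr
  · have hconst : p.eval 1 = p.eval 0 := by rw [eq_C_of_natDegree_le_zero hdeg]; simp
    simpa [hconst] using h0
  have hr' : (0 : ℝ) < r := by exact_mod_cast hr
  have hnode : ∀ j ≤ r, 0 ≤ ε / r * j ∧ ε / r * j ≤ ε := fun j hj => by
    refine ⟨by positivity, ?_⟩
    rw [div_mul_eq_mul_div, div_le_iff₀ hr']
    exact mul_le_mul_of_nonneg_left (by exact_mod_cast hj) hε0.le
  have key := abs_eval_le_of_abs_eval_equispaced_le hdeg (x := 1) (M := 1) (by positivity)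
    (fun j hj => by rw [abs_le]; constructor <;> linarith [hnode j hj])
    (fun j hj => hbound _ (abs_le.mpr ⟨by linarith [hnode j hj], (hnode j hj).2⟩))
  calc |p.eval 1| ≤ Δ * ((2 * r / ε) ^ r / r !) := by
        convert key using 2; field_simp
    _ ≤ Δ * Real.exp (2 * r / ε) := by
        gcongr
        exact Real.pow_div_factorial_le_exp _ (by positivity) r
    _ ≤ Δ * Real.exp (2 * r * (1 + 1 / ε)) := by
        gcongr
        rw [mul_add, mul_one, mul_one_div]
        linarith [show (0 : ℝ) ≤ 2 * r by positivity]

/-- Paturi's extrapolation lemma: if `p` is a real polynomial of degree at most `r` with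
`|p(x)| ≤ Δ` for all `|x| ≤ ε` (where `0 < ε ≤ 1`), then `|p(1)| ≤ Δ · e^{2r(1+1/ε)}`. -/
theorem paturi_extrapolation (p : Polynomial ℝ) (r : ℕ) (hdeg : p.natDegree ≤ r)
    (Δ ε : ℝ) (hΔ : 0 ≤ Δ) (hε : ε ∈ Set.Ioc (0 : ℝ) 1)
    (hbound : ∀ x : ℝ, |x| ≤ ε → |p.eval x| ≤ Δ) :
    |p.eval 1| ≤ Δ * Real.exp (2 * r * (1 + 1 / ε)) :=
  paturi_extrapolation_general p r hdeg Δ ε hε hbound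
end

section
/- If p is a real polynomial of degree at most r and |p(x)| ≤ Δ on [−ε,ε], then for all x with |x| ≥ ε, |p(x)| ≤ Δ · T_r(|x|/ε), where T_r is the r-th Chebyshev polynomial of the first kind. -/
/-!
Lagrange interpolation at the extremal nodes `cos (iπ/n)` of `T_n`, where `T_n` takes the
alternating values `±1`, shows that beyond `1` no polynomial of degree at most `n` bounded by `1`
on `[-1, 1]` exceeds `T_n` (Mathlib's `eval_iterate_derivative_le_of_forall_abs_le_one` with no
derivative). Applied to `±P / Δ`, and after rescaling `[-ε, ε]` onto `[-1, 1]` by a factor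
carrying the sign of `x`, this is the bound.
-/

open Polynomial

theorem Polynomial.eq_zero_of_forall_abs_eval_le_zero {R : Type*} [Field R] [LinearOrder R]
    [IsStrictOrderedRing R] {P : R[X]} {a b : R} (hab : a < b)
    (hP : ∀ y ∈ Set.Icc a b, |P.eval y| ≤ 0) : P = 0 :=
  P.eq_zero_of_infinite_isRoot <| (Set.Icc_infinite hab).mono fun y hy =>
    abs_nonpos_iff.mp (hP y hy)

namespace Polynomial.Chebyshev

theorem abs_eval_le_eval_T_of_forall_abs_le_one {n : ℕ} {P : ℝ[X]} (hPdeg : P.degree ≤ n)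
    (hPbnd : ∀ y ∈ Set.Icc (-1) 1, |P.eval y| ≤ 1) {x : ℝ} (hx : 1 ≤ x) :
    |P.eval x| ≤ (T ℝ n).eval x := by
  have hP := eval_iterate_derivative_le_of_forall_abs_le_one (k := 0) hx hPdeg hPbnd
  have hnegP := eval_iterate_derivative_le_of_forall_abs_le_one (k := 0) (P := -P) hx
    (by rwa [degree_neg]) (by simpa only [eval_neg, abs_neg] using hPbnd)
  simp only [Function.iterate_zero, id_eq, eval_neg] at hP hnegP
  exact abs_le.mpr ⟨by linarith, hP⟩

theorem abs_eval_le_mul_eval_T_of_forall_abs_le {n : ℕ} {P : ℝ[X]} {Δ : ℝ} (hPdeg : P.degree ≤ n)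
    (hPbnd : ∀ y ∈ Set.Icc (-1) 1, |P.eval y| ≤ Δ) {x : ℝ} (hx : 1 ≤ x) :
    |P.eval x| ≤ Δ * (T ℝ n).eval x := by
  obtain hΔ | hΔ := ((abs_nonneg _).trans (hPbnd 0 (by norm_num))).eq_or_lt
  · subst hΔ
    simp [eq_zero_of_forall_abs_eval_le_zero (by norm_num) hPbnd]
  have hscaled := abs_eval_le_eval_T_of_forall_abs_le_one (P := Polynomial.C Δ⁻¹ * P)
    ((degree_C_mul (inv_ne_zero hΔ.ne')).trans_le hPdeg) (fun y hy => ?_) hx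
  · rwa [eval_mul, eval_C, abs_mul, abs_inv, abs_of_pos hΔ, inv_mul_le_iff₀ hΔ] at hscaled
  · rw [eval_mul, eval_C, abs_mul, abs_inv, abs_of_pos hΔ, inv_mul_le_iff₀ hΔ, mul_one]
    exact hPbnd y hy

end Polynomial.Chebyshev

theorem chebyshev_growth_bound_general (p : Polynomial ℝ) (r : ℕ) (hdeg : p.natDegree ≤ r)
    (Δ ε : ℝ) (hε : 0 < ε)
    (hbound : ∀ y : ℝ, |y| ≤ ε → |p.eval y| ≤ Δ)
    (x : ℝ) (hx : ε ≤ |x|) :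
    |p.eval x| ≤ Δ * (Polynomial.Chebyshev.T ℝ r).eval (|x| / ε) := by
  have hx0 : 0 < |x| := hε.trans_le hx
  set c := ε * x / |x| with hc_def
  have hc : |c| = ε := by
    rw [hc_def, abs_div, abs_mul, abs_abs, abs_of_pos hε, mul_div_cancel_right₀ _ hx0.ne']
  have hcx : c * (|x| / ε) = x := by
    rw [hc_def]; field_simp
  have hdeg' : (p.comp (C c * X)).degree ≤ r := by
    refine degree_le_of_natDegree_le (natDegree_comp_le.trans ?_)
    rw [natDegree_C_mul_X c (by rw [← abs_pos, hc]; exact hε), mul_one]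
    exact hdeg
  have hbound' : ∀ y ∈ Set.Icc (-1) 1, |(p.comp (C c * X)).eval y| ≤ Δ := by
    intro y hy
    rw [eval_comp, eval_mul, eval_C, eval_X]
    apply hbound
    rw [abs_mul, hc]
    exact mul_le_of_le_one_right hε.le (abs_le.mpr hy)
  simpa only [eval_comp, eval_mul, eval_C, eval_X, hcx] using
    Chebyshev.abs_eval_le_mul_eval_T_of_forall_abs_le hdeg' hbound' ((one_le_div hε).mpr hx)

/-- Chebyshev growth bound: if `p` is a real polynomial of degree at most `r` with
`|p(x)| ≤ Δ` on `[-ε, ε]` (with `ε > 0`), then for all `|x| ≥ ε` one has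
`|p(x)| ≤ Δ · T_r(|x|/ε)`, where `T_r` is the `r`-th Chebyshev polynomial of the first kind. -/
theorem chebyshev_growth_bound (p : Polynomial ℝ) (r : ℕ) (hdeg : p.natDegree ≤ r)
    (Δ ε : ℝ) (hΔ : 0 ≤ Δ) (hε : 0 < ε)
    (hbound : ∀ y : ℝ, |y| ≤ ε → |p.eval y| ≤ Δ)
    (x : ℝ) (hx : ε ≤ |x|) :
    |p.eval x| ≤ Δ * (Polynomial.Chebyshev.T ℝ r).eval (|x| / ε) :=
  chebyshev_growth_bound_general p r hdeg Δ ε hε hbound x hx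
end

section
/- Polynomial interpolation uniqueness with majority agreement: let q₁ and q₂ be polynomials over a field F of degree at most r, and suppose we are given k pairs (x_i, y_i) with distinct x_i such that q₁(x_i) = y_i for at least (k+r)/2 + 1 indices i and q₂(x_i) = y_i for at least (k+r)/2 + 1 indices i, where k > r. Then q₁ = q₂. -/
open Finset

/-- Uniqueness underlying the Berlekamp–Welch guarantee: if `q₁, q₂` are polynomials of degree
at most `r` over a field, and among `k` data points `(xᵢ, yᵢ)` with distinct `xᵢ` each
polynomial agrees with the data on at least `(k+r)/2 + 1` points, where `k > r`, then
`q₁ = q₂`. -/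
theorem berlekamp_welch_uniqueness {F : Type*} [Field F] [DecidableEq F]
    (r k : ℕ) (hkr : r < k) (q₁ q₂ : Polynomial F)
    (hq₁ : q₁.natDegree ≤ r) (hq₂ : q₂.natDegree ≤ r)
    (x y : Fin k → F) (hx : Function.Injective x)
    (h₁ : ((k : ℝ) + r) / 2 + 1 ≤ (univ.filter fun i => q₁.eval (x i) = y i).card)
    (h₂ : ((k : ℝ) + r) / 2 + 1 ≤ (univ.filter fun i => q₂.eval (x i) = y i).card) :
    q₁ = q₂ := by
  set A := univ.filter fun i => q₁.eval (x i) = y i with hA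
  set B := univ.filter fun i => q₂.eval (x i) = y i with hB
  have hcard : r < (A ∩ B).card := by
    have hu : (A ∪ B).card ≤ k := by
      simpa using (card_le_card (subset_univ (A ∪ B)))
    have h := Finset.card_inter_add_card_union A B
    -- A.card + B.card = (A∩B).card + (A∪B).card
    have : (k : ℝ) + r + 2 ≤ (A.card : ℝ) + B.card := by linarith
    have hn : k + r + 2 ≤ A.card + B.card := by exact_mod_cast this
    omega
  have hroot : ∀ i ∈ A ∩ B, (q₁ - q₂).eval (x i) = 0 := by
    intro i hi
    simp only [Finset.mem_inter, hA, hB, Finset.mem_filter] at hi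
    simp [hi.1.2, hi.2.2]
  have : q₁ - q₂ = 0 := by
    apply Polynomial.eq_zero_of_natDegree_lt_card_of_eval_eq_zero' _ ((A ∩ B).image x)
    · intro z hz
      obtain ⟨i, hi, rfl⟩ := Finset.mem_image.mp hz
      exact hroot i hi
    · rw [Finset.card_image_of_injective _ hx]
      exact lt_of_le_of_lt (Polynomial.natDegree_sub_le _ _ |>.trans (by simp [hq₁, hq₂])) hcard
  exact sub_eq_zero.mp this
end
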